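/- Let G be a group regarded as a one-object category and let g be a non-identity element of G. In the category D_G there are exactly two morphisms from the object given by the identity morphism of the unique object to the object [g]: the pair (u, v) = ([g], id) and the pair (u, v) = (id, [g]). -/

import Mathlib

open CategoryTheory

universe u

namespace Unrolling

/-- A morphism is "an identity" if it is the `eqToHom` of an equality of objects. -/
def IsIdArrow {C : Type*} [Category C] {x y : C} (m : x ⟶ y) : Prop :=
  ∃ h : x = y, m = eqToHom h

/-- A morphism lies in the image of the functor `F` (up to the evident equalities of objects). -/
def InImg {A C : Type*} [Category A] [Category C] (F : A ⥤ C) {x y : C} (m : x ⟶ y) : Prop :=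
  ∃ (a b : A) (k : a ⟶ b) (ha : F.obj a = x) (hb : F.obj b = y),
    m = eqToHom ha.symm ≫ F.map k ≫ eqToHom hb

/-- The free category comonad applied to a functor `c : A ⥤ B`, i.e. the induced functor
between path categories. -/
def freeMap {A B : Type*} [Category A] [Category B] (c : A ⥤ B) : Paths A ⥤ Paths B where
  obj x := c.obj x
  map f := c.toPrefunctor.mapPath f
  map_id _ := rfl
  map_comp f g := c.toPrefunctor.mapPath_comp f g

/-- A "free isomorphism": the image under `i : Paths R ⥤ F_≃(R)` of a length-one path whose
arrow is an isomorphism of `R`. -/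
def FreeIso {R Fs : Type*} [Category R] [Category Fs] (i : Paths R ⥤ Fs)
    {x y : Fs} (m : x ⟶ y) : Prop :=
  ∃ (a b : R) (f : a ⟶ b) (ha : i.obj ((Paths.of R).obj a) = x) (hb : i.obj ((Paths.of R).obj b) = y),
    IsIso f ∧ m = eqToHom ha.symm ≫ i.map ((Paths.of R).map f) ≫ eqToHom hb

/-- The twisted arrow category of `C`: objects are morphisms of `C`. -/
structure Tw (C : Type*) [Category C] where
  left : C
  right : C
  hom : left ⟶ right

/-- Morphisms `f → f'` in the twisted arrow category: pairs `(u, v)` with `f' = u ≫ f ≫ v`. -/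
@[ext]
structure TwHom {C : Type*} [Category C] (X Y : Tw C) where
  u : Y.left ⟶ X.left
  v : X.right ⟶ Y.right
  w : Y.hom = u ≫ X.hom ≫ v

instance {C : Type*} [Category C] : Category (Tw C) where
  Hom := TwHom
  id X := ⟨𝟙 _, 𝟙 _, by simp⟩
  comp {X Y Z} f g := ⟨g.u ≫ f.u, f.v ≫ g.v, by rw [g.w, f.w]; simp⟩
  id_comp f := by apply TwHom.ext <;> simp [CategoryStruct.id, CategoryStruct.comp]
  comp_id f := by apply TwHom.ext <;> simp [CategoryStruct.id, CategoryStruct.comp]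
  assoc f g h := by apply TwHom.ext <;> simp [CategoryStruct.comp]

/-- The defining property of the objects of `D_R` inside the twisted arrow category of
`F_≃(R)`. -/
def InD {R₀ R Fs : Type*} [Category R₀] [Category R] [Category Fs]
    (i₀ : R₀ ⥤ Fs) (i : Paths R ⥤ Fs) (X : Tw Fs) : Prop :=
  ∃ (z : Fs) (g : X.left ⟶ z) (h : z ⟶ X.right),
    X.hom = g ≫ h ∧ (IsIdArrow g ∨ InImg i₀ g) ∧ (IsIdArrow h ∨ FreeIso i h)

/-- The category `D_R`, a full subcategory of the twisted arrow category of `F_≃(R)`. -/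
abbrev DR {R₀ R Fs : Type*} [Category R₀] [Category R] [Category Fs]
    (i₀ : R₀ ⥤ Fs) (i : Paths R ⥤ Fs) := ObjectProperty.FullSubcategory (InD i₀ i)

variable (G : Type) [Group G] {Fs : Type} [SmallCategory Fs]

/-- The unique functor from the terminal category to the one-object category on `G`. -/
def cG : Discrete PUnit.{1} ⥤ SingleObj G := (Functor.const _).obj (SingleObj.star G)

/-- The image in `F_≃(G)` of the length-one path on the arrow `g : G`. -/
def freeArrow (i : Paths (SingleObj G) ⥤ Fs) (g : G) :
    i.obj ((Paths.of (SingleObj G)).obj (SingleObj.star G)) ⟶ i.obj ((Paths.of (SingleObj G)).obj (SingleObj.star G)) :=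
  i.map ((Paths.of (SingleObj G)).map (SingleObj.toEnd G g))

/-- The object of `D_G` given by the identity morphism of the unique object of `F_≃(G)`. -/
def idObj (i₀ : Discrete PUnit.{1} ⥤ Fs) (i : Paths (SingleObj G) ⥤ Fs) : DR i₀ i :=
  ⟨⟨_, _, 𝟙 (i.obj ((Paths.of (SingleObj G)).obj (SingleObj.star G)))⟩,
    ⟨_, 𝟙 _, 𝟙 _, by simp, Or.inl ⟨rfl, rfl⟩, Or.inl ⟨rfl, rfl⟩⟩⟩

/-- The object of `D_G` given by the free isomorphism `[g]`. -/
def freeObj (i₀ : Discrete PUnit.{1} ⥤ Fs) (i : Paths (SingleObj G) ⥤ Fs) (g : G) : DR i₀ i :=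
  ⟨⟨_, _, freeArrow G i g⟩,
    ⟨_, 𝟙 _, freeArrow G i g, by simp,
      Or.inl ⟨rfl, rfl⟩,
      Or.inr ⟨SingleObj.star G, SingleObj.star G, SingleObj.toEnd G g, rfl, rfl,
        inferInstance, by simp [freeArrow]⟩⟩⟩

/-- The morphism from the identity object of `D_G` to `[g]` with components `(u, v) = ([g], id)`. -/
def homL (i₀ : Discrete PUnit.{1} ⥤ Fs) (i : Paths (SingleObj G) ⥤ Fs) (g : G) :
    idObj G i₀ i ⟶ freeObj G i₀ i g :=
  ⟨freeArrow G i g, 𝟙 _, by simp [idObj, freeObj]⟩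

/-- The morphism from the identity object of `D_G` to `[g]` with components `(u, v) = (id, [g])`. -/
def homR (i₀ : Discrete PUnit.{1} ⥤ Fs) (i : Paths (SingleObj G) ⥤ Fs) (g : G) :
    idObj G i₀ i ⟶ freeObj G i₀ i g :=
  ⟨𝟙 _, freeArrow G i g, by simp [idObj, freeObj]⟩

/-! In `F_≃(G)` the pushout only identifies the length-one path on `1` with the empty path, so the
endomorphisms of its unique object form the free monoid on `G ∖ {1}`. Concretely, the cocone sending the
arrow `x` to the one-letter word `x` (the empty word if `x = 1`) induces
`d : F_≃(G) ⥤ SingleObj (FreeMonoid {x // x ≠ 1})`, and evaluating words back in `F_≃(G)` is a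
retraction of `d`, so `d` is faithful by the uniqueness part of the universal property. A morphism
`(u, v)` from the identity to `[g]` satisfies `u ≫ v = [g]`, and a one-letter word factors only as
(letter, empty word) or (empty word, letter). -/

section Pushout

variable {P A B C : Type} [SmallCategory P] [SmallCategory A] [SmallCategory B] [SmallCategory C]
  {f₀ : P ⥤ A} {f : P ⥤ B} {i₀ : A ⥤ C} {i : B ⥤ C}

lemma eq_id_of_comp_eq
    (huniv : ∀ (T : Cat.{0, 0}) (q₀ : A ⥤ T) (q : B ⥤ T),
      f₀ ⋙ q₀ = f ⋙ q → ∃! d : C ⥤ T, i₀ ⋙ d = q₀ ∧ i ⋙ d = q)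
    (hcomm : f₀ ⋙ i₀ = f ⋙ i) {E : C ⥤ C} (h₀ : i₀ ⋙ E = i₀) (h : i ⋙ E = i) : E = 𝟭 C := by
  obtain ⟨d, -, hd⟩ := huniv (Cat.of C) i₀ i hcomm
  exact (hd E ⟨h₀, h⟩).trans (hd (𝟭 C) ⟨i₀.comp_id, i.comp_id⟩).symm

lemma exists_faithful_of_retraction
    (huniv : ∀ (T : Cat.{0, 0}) (q₀ : A ⥤ T) (q : B ⥤ T),
      f₀ ⋙ q₀ = f ⋙ q → ∃! d : C ⥤ T, i₀ ⋙ d = q₀ ∧ i ⋙ d = q)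
    (hcomm : f₀ ⋙ i₀ = f ⋙ i) {T : Type} [SmallCategory T] {q₀ : A ⥤ T} {q : B ⥤ T}
    (hq : f₀ ⋙ q₀ = f ⋙ q) (e : T ⥤ C) (he₀ : q₀ ⋙ e = i₀) (he : q ⋙ e = i) :
    ∃ d : C ⥤ T, i ⋙ d = q ∧ d.Faithful := by
  obtain ⟨d, ⟨hd₀, hd⟩, -⟩ := huniv (Cat.of T) q₀ q hq
  have hde : d ⋙ e = 𝟭 C := eq_id_of_comp_eq huniv hcomm
    ((Functor.assoc _ _ _).symm.trans ((congrArg (· ⋙ e) hd₀).trans he₀))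
    ((Functor.assoc _ _ _).symm.trans ((congrArg (· ⋙ e) hd).trans he))
  exact ⟨d, hd, Functor.Faithful.of_comp_eq hde⟩

end Pushout

lemma _root_.FreeMonoid.mul_eq_of_iff {α : Type*} {x y : FreeMonoid α} {a : α} :
    x * y = FreeMonoid.of a ↔ x = 1 ∧ y = FreeMonoid.of a ∨ x = FreeMonoid.of a ∧ y = 1 :=
  List.append_eq_singleton_iff

lemma comp_eq_cases_of_map_eq_of {C : Type*} [Category C] {α : Type*}
    (d : C ⥤ SingleObj (FreeMonoid α)) [d.Faithful] {x : C} {w u v : x ⟶ x} {a : α}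
    (hw : d.map w = FreeMonoid.of a) (h : u ≫ v = w) :
    u = w ∧ v = 𝟙 x ∨ u = 𝟙 x ∧ v = w := by
  have hd : d.map u ≫ d.map v = FreeMonoid.of a := by rw [← d.map_comp, h, hw]
  have hid : d.map (𝟙 x) = (1 : FreeMonoid α) := d.map_id x
  rcases FreeMonoid.mul_eq_of_iff.mp ((SingleObj.comp_as_mul (FreeMonoid α) _ _).symm.trans hd) with
    ⟨hv, hu⟩ | ⟨hv, hu⟩
  · exact .inl ⟨d.map_injective (hu.trans hw.symm), d.map_injective (hv.trans hid.symm)⟩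
  · exact .inr ⟨d.map_injective (hu.trans hid.symm), d.map_injective (hv.trans hw.symm)⟩

section Words

variable {M : Type}

open Classical in
noncomputable def wordOf [One M] (x : M) : FreeMonoid {x : M // x ≠ 1} :=
  if h : x = 1 then 1 else FreeMonoid.of ⟨x, h⟩

lemma wordOf_one [One M] : wordOf (1 : M) = 1 := dif_pos rfl

lemma wordOf_of_ne_one [One M] {x : M} (hx : x ≠ 1) : wordOf x = FreeMonoid.of ⟨x, hx⟩ := dif_neg hx

variable [Monoid M]

variable (M) in
noncomputable def wordFunctor : Paths (SingleObj M) ⥤ SingleObj (FreeMonoid {x : M // x ≠ 1}) :=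
  Paths.lift { obj := fun _ => SingleObj.star _, map := fun x => wordOf x }

lemma wordFunctor_map_toPath {a b : SingleObj M} (x : a ⟶ b) :
    (wordFunctor M).map x.toPath = wordOf (M := M) x :=
  Paths.lift_toPath _ _

end Words

lemma pathComposition_comp_const_eq_freeMap_comp_wordFunctor :
    pathComposition (Discrete PUnit.{1}) ⋙ (Functor.const (Discrete PUnit.{1})).obj (SingleObj.star _) =
      freeMap (cG G) ⋙ wordFunctor G := by
  refine Paths.ext_functor rfl fun _ _ _ => ?_
  change 𝟙 _ = 𝟙 _ ≫ (wordFunctor G).map (𝟙 (SingleObj.star G)).toPath ≫ 𝟙 _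
  rw [Category.id_comp, Category.comp_id]
  exact (wordOf_one.symm.trans (wordFunctor_map_toPath _).symm)

section Evaluation

variable {G}

def wordEval (i : Paths (SingleObj G) ⥤ Fs) : SingleObj (FreeMonoid {x : G // x ≠ 1}) ⥤ Fs :=
  SingleObj.functor (FreeMonoid.lift fun a => freeArrow G i a.1)

variable {i₀ : Discrete PUnit.{1} ⥤ Fs} {i : Paths (SingleObj G) ⥤ Fs}

lemma freeArrow_one
    (hcomm : pathComposition (Discrete PUnit.{1}) ⋙ i₀ = freeMap (cG G) ⋙ i) :
    freeArrow G i 1 = 𝟙 _ := by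
  have h := Functor.congr_hom hcomm.symm ((Paths.of _).map (𝟙 (⟨⟨⟩⟩ : Discrete PUnit.{1})))
  rw [show (pathComposition _ ⋙ i₀).map _ = 𝟙 _ from i₀.map_id _] at h
  simp only [Category.id_comp, eqToHom_trans, eqToHom_refl] at h
  exact h

lemma wordEval_map_wordOf
    (hcomm : pathComposition (Discrete PUnit.{1}) ⋙ i₀ = freeMap (cG G) ⋙ i) (x : G) :
    (wordEval i).map (X := SingleObj.star _) (Y := SingleObj.star _) (wordOf x) =
      freeArrow G i x := by
  by_cases hx : x = 1
  · subst hx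
    rw [wordOf_one, freeArrow_one hcomm]
    exact (wordEval i).map_id _
  · rw [wordOf_of_ne_one hx]
    rfl

lemma wordFunctor_comp_wordEval
    (hcomm : pathComposition (Discrete PUnit.{1}) ⋙ i₀ = freeMap (cG G) ⋙ i) :
    wordFunctor G ⋙ wordEval i = i := by
  refine Paths.ext_functor rfl fun _ _ x => ?_
  change (wordEval i).map ((wordFunctor G).map x.toPath) = 𝟙 _ ≫ i.map x.toPath ≫ 𝟙 _
  rw [Category.id_comp, Category.comp_id]
  exact (congrArg (wordEval i).map (wordFunctor_map_toPath x)).trans (wordEval_map_wordOf hcomm x)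

lemma const_comp_wordEval
    (hcomm : pathComposition (Discrete PUnit.{1}) ⋙ i₀ = freeMap (cG G) ⋙ i) :
    (Functor.const (Discrete PUnit.{1})).obj (SingleObj.star _) ⋙ wordEval i = i₀ := by
  have hobj : ∀ X, ((Functor.const (Discrete PUnit.{1})).obj (SingleObj.star _) ⋙ wordEval i).obj X =
      i₀.obj X := fun X => (Functor.congr_obj hcomm X).symm
  refine CategoryTheory.Functor.ext hobj fun X Y f => ?_
  rcases X with ⟨⟨⟩⟩
  rcases Y with ⟨⟨⟩⟩
  obtain rfl := Subsingleton.elim f (𝟙 _)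
  simp

lemma exists_faithful_map_freeArrow_eq_of
    (hcomm : pathComposition (Discrete PUnit.{1}) ⋙ i₀ = freeMap (cG G) ⋙ i)
    (huniv : ∀ (T : Cat.{0, 0}) (q₀ : Discrete PUnit.{1} ⥤ T) (q : Paths (SingleObj G) ⥤ T),
      pathComposition (Discrete PUnit.{1}) ⋙ q₀ = freeMap (cG G) ⋙ q →
      ∃! d : Fs ⥤ T, i₀ ⋙ d = q₀ ∧ i ⋙ d = q) :
    ∃ d : Fs ⥤ SingleObj (FreeMonoid {x : G // x ≠ 1}), d.Faithful ∧
      ∀ (g : G) (hg : g ≠ 1), d.map (freeArrow G i g) = FreeMonoid.of ⟨g, hg⟩ := by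
  obtain ⟨d, hd, hfaithful⟩ := exists_faithful_of_retraction huniv hcomm
    (pathComposition_comp_const_eq_freeMap_comp_wordFunctor G) (wordEval i)
    (const_comp_wordEval hcomm) (wordFunctor_comp_wordEval hcomm)
  refine ⟨d, hfaithful, fun g hg => ?_⟩
  have h := Functor.congr_hom hd ((Paths.of _).map (SingleObj.toEnd G g))
  change d.map (freeArrow G i g) = 𝟙 _ ≫ (wordFunctor G).map (SingleObj.toEnd G g).toPath ≫ 𝟙 _ at h
  rw [Category.id_comp, Category.comp_id] at h
  exact h.trans ((wordFunctor_map_toPath _).trans (wordOf_of_ne_one hg))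

end Evaluation

/-- Let `G` be a group regarded as a one-object category and `g` a
non-identity element.  In `D_G` there are exactly two morphisms from the identity object to
`[g]`: the pair `(u, v) = ([g], id)` and the pair `(u, v) = (id, [g])`. -/
theorem DG_exactly_two_homs_from_id
    (i₀ : Discrete PUnit.{1} ⥤ Fs) (i : Paths (SingleObj G) ⥤ Fs)
    (hcomm : pathComposition (Discrete PUnit.{1}) ⋙ i₀ = freeMap (cG G) ⋙ i)
    (huniv : ∀ (T : Cat.{0, 0}) (q₀ : Discrete PUnit.{1} ⥤ T) (q : Paths (SingleObj G) ⥤ T),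
      pathComposition (Discrete PUnit.{1}) ⋙ q₀ = freeMap (cG G) ⋙ q →
      ∃! d : Fs ⥤ T, i₀ ⋙ d = q₀ ∧ i ⋙ d = q)
    (g : G) (hg : g ≠ 1) :
    homL G i₀ i g ≠ homR G i₀ i g ∧
    ∀ t : idObj G i₀ i ⟶ freeObj G i₀ i g, t = homL G i₀ i g ∨ t = homR G i₀ i g := by
  obtain ⟨d, _, hd⟩ := exists_faithful_map_freeArrow_eq_of hcomm huniv
  refine ⟨fun h => ?_, fun t => ?_⟩
  · have hv : 𝟙 _ = freeArrow G i g := congrArg (fun t => t.hom.v) h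
    exact FreeMonoid.one_ne_of _ ((d.map_id _).symm.trans ((congrArg d.map hv).trans (hd g hg)))
  · have hw : t.hom.u ≫ t.hom.v = freeArrow G i g := by
      simpa [idObj, freeObj] using t.hom.w.symm
    rcases comp_eq_cases_of_map_eq_of d (hd g hg) hw with ⟨hu, hv⟩ | ⟨hu, hv⟩
    · exact .inl (InducedCategory.hom_ext (TwHom.ext hu hv))
    · exact .inr (InducedCategory.hom_ext (TwHom.ext hu hv))

end Unrolling
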